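/- arXiv:2411.00558 — 4 statements merged into one kernel-verified Lean document; each statement's English description precedes it below -/
import Mathlib

section
/- (No conflicting justifications at the same checkpoint slot; first claim in the proof of Lemma 'accountable justification'.) Let V be a set of FFG-votes among n validators. If checkpoints 𝒞 = (χ, k) and 𝒞′ = (χ′, k) with the same checkpoint slot k are both justified w.r.t. V and the chains χ and χ′ conflict, then the set of validators that violate E1 w.r.t. V has cardinality m with 3·m ≥ n (i.e., at least n/3 validators are detectably slashable for double voting). -/
structure Block (β : Type) where
  body : β
  p : ℤ

def genesisBlock {β : Type} (g : β) : Block β := ⟨g, -1⟩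

structure Chain (β : Type) (g : β) where
  blocks : List (Block β)
  ne : blocks ≠ []
  head_genesis : blocks.head? = some (genesisBlock g)
  strict : List.Chain' (fun a b => a.p < b.p) blocks

namespace Chain

variable {β : Type} {g : β}

/-- The height of a chain: the slot of its last block. -/
def height (χ : Chain β g) : ℤ := (χ.blocks.getLast χ.ne).p

/-- `χ₁ ⪯ χ₂`: `χ₁` is a prefix of `χ₂`. -/
def IsPrefix (χ₁ χ₂ : Chain β g) : Prop := χ₁.blocks <+: χ₂.blocks

/-- Two chains conflict if neither is a prefix of the other. -/
def Conflicts (χ₁ χ₂ : Chain β g) : Prop := ¬ χ₁.IsPrefix χ₂ ∧ ¬ χ₂.IsPrefix χ₁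

end Chain

def genesisChain {β : Type} (g : β) : Chain β g where
  blocks := [genesisBlock g]
  ne := by simp
  head_genesis := rfl
  strict := List.isChain_singleton _

structure Checkpoint (β : Type) (g : β) where
  chain : Chain β g
  c : ℕ
  height_le : chain.height ≤ (c : ℤ)

def genesisCheckpoint {β : Type} (g : β) : Checkpoint β g where
  chain := genesisChain g
  c := 0
  height_le := by simp [Chain.height, genesisChain, genesisBlock]

namespace Checkpoint

variable {β : Type} {g : β}

/-- Lexicographic order on checkpoints: `𝒞 ≤ 𝒞′`. -/
def le (C C' : Checkpoint β g) : Prop :=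
  C.c < C'.c ∨ (C.c = C'.c ∧ C.chain.height ≤ C'.chain.height)

/-- Strict lexicographic order on checkpoints: `𝒞 < 𝒞′`. -/
def lt (C C' : Checkpoint β g) : Prop :=
  C.c < C'.c ∨ (C.c = C'.c ∧ C.chain.height < C'.chain.height)

end Checkpoint

structure FFGVote (n : ℕ) (β : Type) (g : β) where
  source : Checkpoint β g
  target : Checkpoint β g
  sender : Fin n

def FFGVote.Valid {n : ℕ} {β : Type} {g : β} (m : FFGVote n β g) : Prop :=
  m.source.chain.IsPrefix m.target.chain ∧ m.source.c < m.target.c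

/-- The set of senders of a set of votes. -/
def senders {n : ℕ} {β : Type} {g : β} (M : Set (FFGVote n β g)) : Set (Fin n) :=
  {v | ∃ m ∈ M, m.sender = v}

/-- A checkpoint is justified w.r.t. a set of votes `V`. -/
inductive Justified {n : ℕ} {β : Type} {g : β} (V : Set (FFGVote n β g)) :
    Checkpoint β g → Prop
  | genesis : Justified V (genesisCheckpoint g)
  | step (C : Checkpoint β g) (M : Set (FFGVote n β g))
      (hMV : M ⊆ V)
      (hcard : 2 * n ≤ 3 * (senders M).ncard)
      (hjust : ∀ m ∈ M, Justified V m.source)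
      (hvotes : ∀ m ∈ M, m.Valid ∧
        m.source.chain.IsPrefix C.chain ∧ C.chain.IsPrefix m.target.chain ∧
        m.target.c = C.c) :
      Justified V C

/-- A checkpoint is finalized w.r.t. a set of votes `V`. -/
def Finalized {n : ℕ} {β : Type} {g : β} (V : Set (FFGVote n β g))
    (C : Checkpoint β g) : Prop :=
  C = genesisCheckpoint g ∨
    (Justified V C ∧ ∃ M ⊆ V, 2 * n ≤ 3 * (senders M).ncard ∧
      ∀ m ∈ M, m.Valid ∧ m.source = C ∧ m.target.c = C.c + 1)

/-- E1 (double voting). -/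
def ViolatesE1 {n : ℕ} {β : Type} {g : β} (V : Set (FFGVote n β g)) (v : Fin n) : Prop :=
  ∃ m₁ ∈ V, ∃ m₂ ∈ V, m₁.sender = v ∧ m₂.sender = v ∧ m₁ ≠ m₂ ∧
    m₁.target.c = m₂.target.c

/-- E2 (surround voting). -/
def ViolatesE2 {n : ℕ} {β : Type} {g : β} (V : Set (FFGVote n β g)) (v : Fin n) : Prop :=
  ∃ m₁ ∈ V, ∃ m₂ ∈ V, m₁.sender = v ∧ m₂.sender = v ∧
    m₂.source.lt m₁.source ∧ m₁.target.c < m₂.target.c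

structure Ack (n : ℕ) (β : Type) (g : β) where
  cp : Checkpoint β g
  sender : Fin n

/-- E3 (ack surround). -/
def ViolatesE3 {n : ℕ} {β : Type} {g : β} (V : Set (FFGVote n β g))
    (A : Set (Ack n β g)) (v : Fin n) : Prop :=
  ∃ m ∈ V, ∃ a ∈ A, m.sender = v ∧ a.sender = v ∧
    m.source.lt a.cp ∧ a.cp.c < m.target.c

/-- Finalized with acknowledgments. -/
def FinalizedWithAcks {n : ℕ} {β : Type} {g : β} (V : Set (FFGVote n β g))
    (A : Set (Ack n β g)) (C : Checkpoint β g) : Prop :=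
  Finalized V C ∨
    (Justified V C ∧ 2 * n ≤ 3 * (Set.ncard {v : Fin n | (⟨C, v⟩ : Ack n β g) ∈ A}))


/-!
Both checkpoints are justified by supermajority links whose targets have slot `k` and extend
the respective conflicting chains, so no vote can lie in both links. Two sets of at least `2n/3`
validators among `n` share at least `n/3`, and each shared validator sent two distinct votes
with target slot `k`.
-/

namespace Chain

variable {β : Type} {g : β}

theorem genesisChain_isPrefix (χ : Chain β g) : (genesisChain g).IsPrefix χ := by
  obtain ⟨b, bs, hχ⟩ := List.exists_cons_of_ne_nil χ.ne
  have hb : b = genesisBlock g := by simpa [hχ] using χ.head_genesis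
  simp [IsPrefix, genesisChain, hχ, hb]

theorem not_conflicts_of_isPrefix_of_isPrefix {χ₁ χ₂ χ : Chain β g}
    (h₁ : χ₁.IsPrefix χ) (h₂ : χ₂.IsPrefix χ) : ¬ χ₁.Conflicts χ₂ := fun hconf =>
  (List.prefix_or_prefix_of_prefix h₁ h₂).elim hconf.1 hconf.2

theorem ne_genesisChain_of_conflicts {χ χ' : Chain β g} (h : χ.Conflicts χ') :
    χ ≠ genesisChain g := by
  rintro rfl
  exact h.1 (genesisChain_isPrefix χ')

end Chain

theorem Set.card_le_three_mul_ncard_inter {α : Type*} [Finite α] {s t : Set α}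
    (hs : 2 * Nat.card α ≤ 3 * s.ncard) (ht : 2 * Nat.card α ≤ 3 * t.ncard) :
    Nat.card α ≤ 3 * (s ∩ t).ncard := by
  have hunion := Set.ncard_inter_add_ncard_union s t
  have hle := Set.ncard_le_card (s ∪ t)
  omega

variable {n : ℕ} {β : Type} {g : β}

theorem Justified.exists_supermajority_link {V : Set (FFGVote n β g)} {C : Checkpoint β g}
    (hC : Justified V C) (hgen : C.chain ≠ genesisChain g) :
    ∃ M ⊆ V, 2 * n ≤ 3 * (senders M).ncard ∧
      ∀ m ∈ M, C.chain.IsPrefix m.target.chain ∧ m.target.c = C.c := by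
  cases hC with
  | genesis => exact absurd rfl hgen
  | step _ M hMV hcard _ hvotes =>
    exact ⟨M, hMV, hcard, fun m hm => ⟨(hvotes m hm).2.2.1, (hvotes m hm).2.2.2⟩⟩

theorem senders_inter_subset_violatesE1 {V M M' : Set (FFGVote n β g)} (hMV : M ⊆ V)
    (hM'V : M' ⊆ V) (hdisj : Disjoint M M') {k : ℕ} (hM : ∀ m ∈ M, m.target.c = k)
    (hM' : ∀ m ∈ M', m.target.c = k) :
    senders M ∩ senders M' ⊆ {v | ViolatesE1 V v} := by
  rintro v ⟨⟨m, hm, rfl⟩, ⟨m', hm', hsender⟩⟩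
  exact ⟨m, hMV hm, m', hM'V hm', rfl, hsender, fun h => hdisj.ne_of_mem hm hm' h,
    (hM m hm).trans (hM' m' hm').symm⟩

/-- No conflicting justifications at the same checkpoint slot. -/
theorem no_conflicting_justifications_same_slot
    {n : ℕ} {β : Type} {g : β} (V : Set (FFGVote n β g))
    (C C' : Checkpoint β g) (hslot : C.c = C'.c)
    (hC : Justified V C) (hC' : Justified V C')
    (hconf : C.chain.Conflicts C'.chain) :
    n ≤ 3 * Set.ncard {v : Fin n | ViolatesE1 V v} := by
  obtain ⟨M, hMV, hMcard, hMlink⟩ :=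
    hC.exists_supermajority_link (Chain.ne_genesisChain_of_conflicts hconf)
  obtain ⟨M', hM'V, hM'card, hM'link⟩ :=
    hC'.exists_supermajority_link (Chain.ne_genesisChain_of_conflicts hconf.symm)
  have hdisj : Disjoint M M' := Set.disjoint_left.2 fun m hm hm' =>
    Chain.not_conflicts_of_isPrefix_of_isPrefix (hMlink m hm).1 (hM'link m hm').1 hconf
  have hviol : senders M ∩ senders M' ⊆ {v | ViolatesE1 V v} :=
    senders_inter_subset_violatesE1 hMV hM'V hdisj (fun m hm => (hMlink m hm).2)
      (fun m hm => (hM'link m hm).2.trans hslot.symm)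
  calc n ≤ 3 * (senders M ∩ senders M').ncard := by
        simpa using Set.card_le_three_mul_ncard_inter (α := Fin n)
          (by simpa using hMcard) (by simpa using hM'card)
    _ ≤ 3 * Set.ncard {v : Fin n | ViolatesE1 V v} :=
        Nat.mul_le_mul_left 3 (Set.ncard_le_ncard hviol)
end

section
/- (Lemma 'accountable safety'.) Let V₁ and V₂ be sets of FFG-votes among n validators, let 𝒞₁ be a checkpoint finalized w.r.t. V₁ and 𝒞₂ a checkpoint finalized w.r.t. V₂, and suppose chains χ₁ ⪯ 𝒞₁.chain and χ₂ ⪯ 𝒞₂.chain conflict. Then the set of validators that violate E1 or E2 w.r.t. V₁ ∪ V₂ has cardinality m with 3·m ≥ n (i.e., if two conflicting chains are finalized according to any two views, at least n/3 validators can be detected to have violated either E1 or E2). -/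
/-!
Assume `𝒞₁.c ≤ 𝒞₂.c` and follow the justification of `𝒞₂` backwards through sources, as long
as the current checkpoint `X` does not extend `𝒞₁.chain` and either lies in a later slot than `𝒞₁`
or in the same slot on a conflicting chain. The walk cannot reach genesis, so it stops at some `X`:
- if `X.c = 𝒞₁.c`, the two justifying supermajorities of `𝒞₁` and `X` meet in at least `n/3`
  validators, each of which cast two distinct votes with target slot `𝒞₁.c` (E1);
- otherwise every vote justifying `X` has a source below `𝒞₁` and a target slot beyond `𝒞₁.c`,
  so it double votes (E1, target slot `𝒞₁.c + 1`) or surrounds (E2) a vote finalizing `𝒞₁`.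
-/

variable {n : ℕ} {β : Type} {g : β}

theorem genesisChain_isPrefix (χ : Chain β g) : (genesisChain g).IsPrefix χ := by
  obtain ⟨_ | ⟨b, bs⟩, hne, hhead, -⟩ := χ
  · exact absurd rfl hne
  · obtain rfl : b = genesisBlock g := Option.some.inj hhead
    exact ⟨bs, rfl⟩

namespace Chain

theorem IsPrefix.trans {χ₁ χ₂ χ₃ : Chain β g} (h₁₂ : χ₁.IsPrefix χ₂) (h₂₃ : χ₂.IsPrefix χ₃) :
    χ₁.IsPrefix χ₃ :=
  List.IsPrefix.trans h₁₂ h₂₃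

theorem IsPrefix.height_lt {χ₁ χ₂ : Chain β g} (h : χ₁.IsPrefix χ₂) (hne : ¬ χ₂.IsPrefix χ₁) :
    χ₁.height < χ₂.height := by
  obtain ⟨t, ht⟩ := h
  have ht_ne : t ≠ [] := by
    rintro rfl
    exact hne ⟨[], by simpa using ht.symm⟩
  have hlast : χ₂.blocks.getLast χ₂.ne = t.getLast ht_ne := by
    simp only [← ht, List.getLast_append_of_ne_nil _ ht_ne]
  have hsorted : List.Pairwise (fun a b : Block β => a.p < b.p) (χ₁.blocks ++ t) := by
    have : IsTrans (Block β) (fun a b => a.p < b.p) := ⟨fun _ _ _ => lt_trans⟩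
    exact ht ▸ List.isChain_iff_pairwise.mp χ₂.strict
  rw [height, height, hlast]
  exact (List.pairwise_append.mp hsorted).2.2 _ (List.getLast_mem _) _ (List.getLast_mem _)

theorem Conflicts.symm {χ₁ χ₂ : Chain β g} (h : χ₁.Conflicts χ₂) : χ₂.Conflicts χ₁ :=
  ⟨h.2, h.1⟩

theorem Conflicts.of_isPrefix_of_isPrefix {χ₁ χ₂ χ₁' χ₂' : Chain β g} (h : χ₁.Conflicts χ₂)
    (h₁ : χ₁.IsPrefix χ₁') (h₂ : χ₂.IsPrefix χ₂') : χ₁'.Conflicts χ₂' := by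
  refine ⟨fun h' => ?_, fun h' => ?_⟩
  · exact (List.prefix_or_prefix_of_prefix (h₁.trans h') h₂).elim h.1 h.2
  · exact (List.prefix_or_prefix_of_prefix h₁ (h₂.trans h')).elim h.1 h.2

theorem Conflicts.not_isPrefix_of_isPrefix {χ₁ χ₂ χ : Chain β g} (h : χ₁.Conflicts χ₂)
    (h₁ : χ₁.IsPrefix χ) : ¬ χ₂.IsPrefix χ :=
  fun h₂ => (List.prefix_or_prefix_of_prefix h₁ h₂).elim h.1 h.2

theorem not_conflicts_genesisChain (χ : Chain β g) : ¬ (genesisChain g).Conflicts χ :=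
  fun h => h.1 (genesisChain_isPrefix χ)

end Chain

theorem Checkpoint.lt_irrefl (C : Checkpoint β g) : ¬ C.lt C := by
  rintro (h | ⟨-, h⟩) <;> exact _root_.lt_irrefl _ h

def Checkpoint.Precedes (X C : Checkpoint β g) : Prop :=
  X.c < C.c ∨ (X.c = C.c ∧ X.chain.IsPrefix C.chain)

theorem Checkpoint.Precedes.lt {X C : Checkpoint β g} (h : X.Precedes C)
    (hCX : ¬ C.chain.IsPrefix X.chain) : X.lt C :=
  h.imp_right fun ⟨hc, hXC⟩ => ⟨hc, hXC.height_lt hCX⟩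

theorem genesisCheckpoint_precedes (C : Checkpoint β g) : (genesisCheckpoint g).Precedes C :=
  (Nat.eq_zero_or_pos C.c).elim (fun h => Or.inr ⟨h.symm, genesisChain_isPrefix _⟩) Or.inl

theorem le_three_mul_ncard_of_inter_subset {s t u : Set (Fin n)} (hs : 2 * n ≤ 3 * s.ncard)
    (ht : 2 * n ≤ 3 * t.ncard) (h : s ∩ t ⊆ u) : n ≤ 3 * u.ncard := by
  have hsum := Set.ncard_inter_add_ncard_union s t
  have hunion : (s ∪ t).ncard ≤ n := by simpa using Set.ncard_le_card (s ∪ t)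
  have hinter : (s ∩ t).ncard ≤ u.ncard := Set.ncard_le_ncard h
  omega

def slashable (V : Set (FFGVote n β g)) : Set (Fin n) :=
  {v | ViolatesE1 V v ∨ ViolatesE2 V v}

def FFGVote.IsSlashablePair (m₁ m₂ : FFGVote n β g) : Prop :=
  (m₁ ≠ m₂ ∧ m₁.target.c = m₂.target.c) ∨ (m₂.source.lt m₁.source ∧ m₁.target.c < m₂.target.c)

theorem le_three_mul_ncard_slashable {V₁ V₂ M₁ M₂ : Set (FFGVote n β g)}
    (hM₁V : M₁ ⊆ V₁) (hM₁ : 2 * n ≤ 3 * (senders M₁).ncard)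
    (hM₂V : M₂ ⊆ V₂) (hM₂ : 2 * n ≤ 3 * (senders M₂).ncard)
    (hpair : ∀ m₁ ∈ M₁, ∀ m₂ ∈ M₂, m₁.sender = m₂.sender → m₁.IsSlashablePair m₂) :
    n ≤ 3 * (slashable (V₁ ∪ V₂)).ncard := by
  refine le_three_mul_ncard_of_inter_subset hM₁ hM₂ ?_
  rintro v ⟨⟨m₁, hm₁, rfl⟩, ⟨m₂, hm₂, hsender⟩⟩
  have hm₁V : m₁ ∈ V₁ ∪ V₂ := Or.inl (hM₁V hm₁)
  have hm₂V : m₂ ∈ V₁ ∪ V₂ := Or.inr (hM₂V hm₂)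
  rcases hpair m₁ hm₁ m₂ hm₂ hsender.symm with ⟨hne, hc⟩ | ⟨hlt, hc⟩
  · exact Or.inl ⟨m₁, hm₁V, m₂, hm₂V, rfl, hsender, hne, hc⟩
  · exact Or.inr ⟨m₁, hm₁V, m₂, hm₂V, rfl, hsender, hlt, hc⟩

theorem Finalized.justified {V : Set (FFGVote n β g)} {C : Checkpoint β g}
    (hC : Finalized V C) : Justified V C := by
  rcases hC with rfl | ⟨hJ, -⟩
  exacts [Justified.genesis, hJ]

theorem le_three_mul_ncard_slashable_of_justified_conflicts_of_c_eq
    {V₁ V₂ : Set (FFGVote n β g)} {C₁ C₂ : Checkpoint β g}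
    (hC₁ : Justified V₁ C₁) (hC₂ : Justified V₂ C₂)
    (hconf : C₁.chain.Conflicts C₂.chain) (hc : C₁.c = C₂.c) :
    n ≤ 3 * (slashable (V₁ ∪ V₂)).ncard := by
  rcases hC₁ with _ | ⟨_, M₁, hM₁V, hM₁, -, hvotes₁⟩
  · exact absurd hconf (Chain.not_conflicts_genesisChain _)
  rcases hC₂ with _ | ⟨_, M₂, hM₂V, hM₂, -, hvotes₂⟩
  · exact absurd hconf.symm (Chain.not_conflicts_genesisChain _)
  refine le_three_mul_ncard_slashable hM₁V hM₁ hM₂V hM₂ fun m₁ hm₁ m₂ hm₂ _ => Or.inl ⟨?_, ?_⟩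
  · rintro rfl
    exact hconf.not_isPrefix_of_isPrefix (hvotes₁ m₁ hm₁).2.2.1 (hvotes₂ m₁ hm₂).2.2.1
  · rw [(hvotes₁ m₁ hm₁).2.2.2, (hvotes₂ m₂ hm₂).2.2.2, hc]

theorem le_three_mul_ncard_slashable_of_finalizing_of_jumping
    {V₁ V₂ M₁ M₂ : Set (FFGVote n β g)} {C : Checkpoint β g}
    (hM₁V : M₁ ⊆ V₁) (hM₁ : 2 * n ≤ 3 * (senders M₁).ncard)
    (hM₁C : ∀ m ∈ M₁, m.source = C ∧ m.target.c = C.c + 1)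
    (hM₂V : M₂ ⊆ V₂) (hM₂ : 2 * n ≤ 3 * (senders M₂).ncard)
    (hM₂C : ∀ m ∈ M₂, m.source.lt C ∧ C.c < m.target.c) :
    n ≤ 3 * (slashable (V₁ ∪ V₂)).ncard := by
  refine le_three_mul_ncard_slashable hM₁V hM₁ hM₂V hM₂ fun m₁ hm₁ m₂ hm₂ _ => ?_
  obtain ⟨hsource₁, htarget₁⟩ := hM₁C m₁ hm₁
  obtain ⟨hsource₂, htarget₂⟩ := hM₂C m₂ hm₂
  rcases (Nat.succ_le_of_lt htarget₂).eq_or_lt with heq | hlt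
  · refine Or.inl ⟨?_, by omega⟩
    rintro rfl
    exact C.lt_irrefl (hsource₁ ▸ hsource₂)
  · exact Or.inr ⟨hsource₁ ▸ hsource₂, by omega⟩

theorem le_three_mul_ncard_slashable_of_finalized_of_justified
    {V₁ V₂ : Set (FFGVote n β g)} {C X : Checkpoint β g}
    (hC : Finalized V₁ C) (hX : Justified V₂ X)
    (hCX : ¬ C.chain.IsPrefix X.chain) (hXC : ¬ X.Precedes C) :
    n ≤ 3 * (slashable (V₁ ∪ V₂)).ncard := by
  obtain rfl | ⟨hCJ, M₁, hM₁V, hM₁, hM₁C⟩ := hC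
  · exact absurd (genesisChain_isPrefix _) hCX
  induction hX with
  | genesis => exact absurd (genesisCheckpoint_precedes C) hXC
  | step X M₂ hM₂V hM₂ hjust hvotes ih =>
    by_cases hrec : ∃ m ∈ M₂, ¬ m.source.Precedes C
    · obtain ⟨m, hm, hmC⟩ := hrec
      exact ih m hm (fun h => hCX (h.trans (hvotes m hm).2.1)) hmC
    push Not at hrec
    simp only [Checkpoint.Precedes, not_or, not_and, not_lt] at hXC
    rcases hXC.1.lt_or_eq with hlt | hc
    · refine le_three_mul_ncard_slashable_of_finalizing_of_jumping hM₁V hM₁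
        (fun m hm => (hM₁C m hm).2) hM₂V hM₂ fun m hm => ⟨?_, (hvotes m hm).2.2.2 ▸ hlt⟩
      exact (hrec m hm).lt fun h => hCX (h.trans (hvotes m hm).2.1)
    · exact le_three_mul_ncard_slashable_of_justified_conflicts_of_c_eq hCJ
        (Justified.step X M₂ hM₂V hM₂ hjust hvotes) ⟨hCX, hXC.2 hc.symm⟩ hc

theorem le_three_mul_ncard_slashable_of_finalized_of_justified_of_conflicts
    {V₁ V₂ : Set (FFGVote n β g)} {C₁ C₂ : Checkpoint β g}
    (hC₁ : Finalized V₁ C₁) (hC₂ : Justified V₂ C₂)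
    (hconf : C₁.chain.Conflicts C₂.chain) (hc : C₁.c ≤ C₂.c) :
    n ≤ 3 * (slashable (V₁ ∪ V₂)).ncard :=
  le_three_mul_ncard_slashable_of_finalized_of_justified hC₁ hC₂ hconf.1
    fun h => h.elim (fun hlt => hlt.not_ge hc) fun h => hconf.2 h.2

/-- Lemma "accountable safety". -/
theorem accountable_safety
    {n : ℕ} {β : Type} {g : β} (V₁ V₂ : Set (FFGVote n β g))
    (C₁ C₂ : Checkpoint β g)
    (hC₁ : Finalized V₁ C₁) (hC₂ : Finalized V₂ C₂)
    (χ₁ χ₂ : Chain β g)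
    (h₁ : χ₁.IsPrefix C₁.chain) (h₂ : χ₂.IsPrefix C₂.chain)
    (hconf : χ₁.Conflicts χ₂) :
    n ≤ 3 * Set.ncard {v : Fin n |
      ViolatesE1 (V₁ ∪ V₂) v ∨ ViolatesE2 (V₁ ∪ V₂) v} := by
  have hconf' : C₁.chain.Conflicts C₂.chain := hconf.of_isPrefix_of_isPrefix h₁ h₂
  rcases le_total C₁.c C₂.c with hc | hc
  · exact le_three_mul_ncard_slashable_of_finalized_of_justified_of_conflicts
      hC₁ hC₂.justified hconf' hc
  · rw [Set.union_comm]
    exact le_three_mul_ncard_slashable_of_finalized_of_justified_of_conflicts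
      hC₂ hC₁.justified hconf'.symm hc
end

section
/- (Lemma 'honest validators are never slashed' under Constraint 1.) Let v be a validator whose sent FFG-votes are given by a slot-indexed family: a partial function on ℕ assigning to each slot t at most one pair of checkpoints (S_t, T_t), such that T_t.c = t whenever the pair is defined at t, and S_t ≤ S_{t′} (in the checkpoint order) whenever t ≤ t′ are both slots where the family is defined. Then v violates neither E1 nor E2 with respect to the set of votes {(S_t, T_t, v) : t in the domain of the family}. -/
/- An honest validator casts at most one vote per target slot, so no two of its votes share a
target slot (E1); and its sources only grow with the target slot, so no later vote can have a
source strictly below that of an earlier one (E2). -/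

theorem Checkpoint.not_lt_of_le {β : Type} {g : β} {C C' : Checkpoint β g} (h : C.le C') :
    ¬ C'.lt C := by
  rintro (hc | ⟨hc, hheight⟩) <;> rcases h with hc' | ⟨hc', hheight'⟩ <;> omega

section SlotVotes

variable {n : ℕ} {β : Type} {g : β}

def slotVotes (f : ℕ → Option (Checkpoint β g × Checkpoint β g)) (v : Fin n) :
    Set (FFGVote n β g) :=
  {m | ∃ t S T, f t = some (S, T) ∧ m = ⟨S, T, v⟩}

variable {f : ℕ → Option (Checkpoint β g × Checkpoint β g)} {v : Fin n}

theorem mem_slotVotes (htarget : ∀ t S T, f t = some (S, T) → T.c = t) {m : FFGVote n β g} :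
    m ∈ slotVotes f v ↔ f m.target.c = some (m.source, m.target) ∧ m.sender = v := by
  constructor
  · rintro ⟨t, S, T, hf, rfl⟩
    exact ⟨htarget t S T hf ▸ hf, rfl⟩
  · rintro ⟨hf, rfl⟩
    exact ⟨_, _, _, hf, rfl⟩

theorem not_violatesE1_slotVotes (htarget : ∀ t S T, f t = some (S, T) → T.c = t) :
    ¬ ViolatesE1 (slotVotes f v) v := by
  rintro ⟨⟨S₁, T₁, v₁⟩, hm₁, ⟨S₂, T₂, v₂⟩, hm₂, rfl, rfl, hne, hc⟩
  rw [mem_slotVotes htarget] at hm₁ hm₂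
  dsimp only at hm₁ hm₂ hc
  rw [hc, hm₂.1, Option.some_inj, Prod.mk.injEq] at hm₁
  obtain ⟨rfl, rfl⟩ := hm₁.1
  exact hne rfl

theorem not_violatesE2_slotVotes (htarget : ∀ t S T, f t = some (S, T) → T.c = t)
    (hmono : ∀ t t' S T S' T', t ≤ t' → f t = some (S, T) → f t' = some (S', T') → S.le S') :
    ¬ ViolatesE2 (slotVotes f v) v := by
  rintro ⟨m₁, hm₁, m₂, hm₂, -, -, hsource, hslot⟩
  rw [mem_slotVotes htarget] at hm₁ hm₂
  exact Checkpoint.not_lt_of_le (hmono _ _ _ _ _ _ hslot.le hm₁.1 hm₂.1) hsource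

end SlotVotes

/-- honest validators are never slashed, under Constraint 1. -/
theorem honest_never_slashed
    {n : ℕ} {β : Type} {g : β} (v : Fin n)
    (f : ℕ → Option (Checkpoint β g × Checkpoint β g))
    (htarget : ∀ t S T, f t = some (S, T) → T.c = t)
    (hmono : ∀ t t' S T S' T', t ≤ t' → f t = some (S, T) → f t' = some (S', T') →
      S.le S') :
    ¬ ViolatesE1 {m : FFGVote n β g | ∃ t S T, f t = some (S, T) ∧ m = ⟨S, T, v⟩} v ∧
    ¬ ViolatesE2 {m : FFGVote n β g | ∃ t S T, f t = some (S, T) ∧ m = ⟨S, T, v⟩} v :=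
  ⟨not_violatesE1_slotVotes htarget, not_violatesE2_slotVotes htarget hmono⟩
end

section
/- (Conflicting quorum certificates cannot form in the same slot, used in the fast-confirmation analysis.) Let W ⊆ Fin n × Chain be a slot-vote record, let E = {v : there exist chains χ ≠ χ′ with (v, χ) ∈ W and (v, χ′) ∈ W} be the set of equivocators, and suppose 3·|E| < n. Let χ₁ and χ₂ be chains and for i = 1, 2 let A_i = {v : there exists a chain χ with (v, χ) ∈ W and χ_i ⪯ χ} be the set of validators voting for an extension of χ_i. If 3·|A₁| ≥ 2n and 3·|A₂| ≥ 2n, then χ₁ and χ₂ do not conflict. -/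
/-- A slot-vote record: which chains each validator voted for in a given slot. -/
abbrev SlotVoteRecord (n : ℕ) (β : Type) (g : β) := Set (Fin n × Chain β g)

theorem natCard_le_three_mul_ncard_inter {α : Type*} [Finite α] {A B : Set α}
    (hA : 2 * Nat.card α ≤ 3 * A.ncard) (hB : 2 * Nat.card α ≤ 3 * B.ncard) :
    Nat.card α ≤ 3 * (A ∩ B).ncard := by
  have hunion : (A ∪ B).ncard + (A ∩ B).ncard = A.ncard + B.ncard :=
    Set.ncard_union_add_ncard_inter A B
  have hle : (A ∪ B).ncard ≤ Nat.card α := Set.ncard_le_card _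
  omega

theorem Chain.not_conflicts_of_isPrefix {β : Type} {g : β} {χ₁ χ₂ χ : Chain β g}
    (h₁ : χ₁.IsPrefix χ) (h₂ : χ₂.IsPrefix χ) : ¬ χ₁.Conflicts χ₂ := fun hconf =>
  (List.prefix_or_prefix_of_prefix h₁ h₂).elim hconf.1 hconf.2

namespace SlotVoteRecord

variable {n : ℕ} {β : Type} {g : β}

def equivocators (W : SlotVoteRecord n β g) : Set (Fin n) :=
  {v | ∃ χ χ' : Chain β g, χ ≠ χ' ∧ (v, χ) ∈ W ∧ (v, χ') ∈ W}

def supporters (W : SlotVoteRecord n β g) (χ₀ : Chain β g) : Set (Fin n) :=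
  {v | ∃ χ : Chain β g, (v, χ) ∈ W ∧ χ₀.IsPrefix χ}

theorem eq_of_mem_of_notMem_equivocators {W : SlotVoteRecord n β g} {v : Fin n}
    {χ χ' : Chain β g} (hv : v ∉ W.equivocators) (h : (v, χ) ∈ W) (h' : (v, χ') ∈ W) :
    χ = χ' := by
  by_contra hne
  exact hv ⟨χ, χ', hne, h, h'⟩

theorem not_conflicts_of_mem_supporters {W : SlotVoteRecord n β g} {v : Fin n}
    {χ₁ χ₂ : Chain β g} (hv : v ∉ W.equivocators) (h₁ : v ∈ W.supporters χ₁)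
    (h₂ : v ∈ W.supporters χ₂) : ¬ χ₁.Conflicts χ₂ := by
  obtain ⟨χ, hχ, hχ₁⟩ := h₁
  obtain ⟨χ', hχ', hχ'₂⟩ := h₂
  obtain rfl := eq_of_mem_of_notMem_equivocators hv hχ hχ'
  exact Chain.not_conflicts_of_isPrefix hχ₁ hχ'₂

end SlotVoteRecord

/-- conflicting quorum certificates cannot form in the same slot. -/
theorem no_conflicting_quorum_certificates
    {n : ℕ} {β : Type} {g : β} (W : SlotVoteRecord n β g)
    (hE : 3 * Set.ncard {v : Fin n |
      ∃ χ χ' : Chain β g, χ ≠ χ' ∧ (v, χ) ∈ W ∧ (v, χ') ∈ W} < n)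
    (χ₁ χ₂ : Chain β g)
    (hA₁ : 2 * n ≤ 3 * Set.ncard {v : Fin n |
      ∃ χ : Chain β g, (v, χ) ∈ W ∧ χ₁.IsPrefix χ})
    (hA₂ : 2 * n ≤ 3 * Set.ncard {v : Fin n |
      ∃ χ : Chain β g, (v, χ) ∈ W ∧ χ₂.IsPrefix χ}) :
    ¬ χ₁.Conflicts χ₂ := by
  change 3 * W.equivocators.ncard < n at hE
  change 2 * n ≤ 3 * (W.supporters χ₁).ncard at hA₁
  change 2 * n ≤ 3 * (W.supporters χ₂).ncard at hA₂
  have hoverlap : n ≤ 3 * (W.supporters χ₁ ∩ W.supporters χ₂).ncard := by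
    simpa using natCard_le_three_mul_ncard_inter (α := Fin n) (by simpa using hA₁)
      (by simpa using hA₂)
  obtain ⟨v, ⟨h₁, h₂⟩, hv⟩ :=
    Set.exists_mem_notMem_of_ncard_lt_ncard (s := W.equivocators)
      (t := W.supporters χ₁ ∩ W.supporters χ₂) (by omega)
  exact W.not_conflicts_of_mem_supporters hv h₁ h₂
end
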